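/- Let (Ω, ℱ, μ) be a probability space, E a measurable space, and (X_1, Y_1), …, (X_n, Y_n) i.i.d. pairs with X_i : Ω → E measurable and Y_i : Ω → ℝ taking only the values 0 and 1. Let g, w, g' : E → ℝ be bounded measurable functions such that g ∘ X_1 is a version of E[Y_1 | σ(X_1)], let q = E[g(X_1)], and let 1 ≤ r ≤ n. Then Cov( Σ_{i=1}^n (g(X_i) − q), Σ_{i=1}^r w(X_i) (Y_i − g(X_i)) g'(X_i) ) = 0. -/

import Mathlib

/-!
Write `Gₙ = Σᵢ aᵢ` and `Hᵣ = Σⱼ bⱼ` with `aᵢ = g(Xᵢ) - q` and `bⱼ = w(Xⱼ)(Yⱼ - g(Xⱼ))g'(Xⱼ)`; the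
covariance is bilinear, so it suffices that every `Cov(aᵢ, bⱼ)` vanishes. For `i ≠ j` this is
independence of the pairs. For `i = j` the covariance only depends on the law of `(Xᵢ, Yᵢ)`, which
is that of `(X₁, Y₁)`, and there `Y₁ - g(X₁) = Y₁ - E[Y₁ | X₁]` is orthogonal to every bounded
function of `X₁`, in particular to `w(X₁)g'(X₁)` and to `(g(X₁) - q) w(X₁) g'(X₁)`.
-/

open MeasureTheory ProbabilityTheory

lemma integral_mul_sub_condExp_eq_zero {Ω : Type*} {m mΩ : MeasurableSpace Ω} {μ : Measure Ω}
    [IsFiniteMeasure μ] (hm : m ≤ mΩ) {Z Y : Ω → ℝ} (hZ : StronglyMeasurable[m] Z)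
    (hZb : MemLp Z ⊤ μ) (hY : Integrable Y μ) :
    ∫ ω, Z ω * (Y ω - μ[Y | m] ω) ∂μ = 0 := by
  have hZY : Integrable (Z * Y) μ := memLp_one_iff_integrable.1 <|
    (memLp_one_iff_integrable.2 hY).mul hZb
  have hZc : Integrable (Z * μ[Y | m]) μ := memLp_one_iff_integrable.1 <|
    (memLp_one_iff_integrable.2 integrable_condExp).mul hZb
  have hpull : ∫ ω, (Z * Y) ω ∂μ = ∫ ω, (Z * μ[Y | m]) ω ∂μ := by
    rw [← integral_condExp hm]
    exact integral_congr_ae (condExp_mul_of_stronglyMeasurable_left hZ hZY hY)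
  simp_rw [mul_sub]
  exact (integral_sub hZY hZc).trans (sub_eq_zero.2 hpull)

section Regression

variable {Ω E : Type*} {mΩ : MeasurableSpace Ω} [MeasurableSpace E] {μ : Measure Ω}
  {X : Ω → E} {Y : Ω → ℝ} {g : E → ℝ}

lemma memLp_top_comp_of_abs_le (hX : Measurable X) {f : E → ℝ} (hf : Measurable f) {C : ℝ}
    (hC : ∀ t, |f t| ≤ C) : MemLp (fun ω => f (X ω)) ⊤ μ :=
  memLp_top_of_bound (hf.comp hX).aestronglyMeasurable C (ae_of_all _ fun ω => hC (X ω))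

variable [IsFiniteMeasure μ]

lemma integral_comp_mul_sub_eq_zero (hX : Measurable X) (hY : Integrable Y μ)
    (hcond : (fun ω => g (X ω)) =ᵐ[μ] μ[Y | MeasurableSpace.comap X inferInstance])
    {f : E → ℝ} (hf : Measurable f) (hfX : MemLp (fun ω => f (X ω)) ⊤ μ) :
    ∫ ω, f (X ω) * (Y ω - g (X ω)) ∂μ = 0 := by
  rw [← integral_mul_sub_condExp_eq_zero hX.comap_le
    (hf.comp (comap_measurable X)).stronglyMeasurable hfX hY]
  refine integral_congr_ae ?_
  filter_upwards [hcond] with ω hω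
  rw [hω]
  rfl

lemma covariance_comp_mul_sub_eq_zero [IsProbabilityMeasure μ] (hX : Measurable X) (hY : MemLp Y 2 μ)
    (hcond : (fun ω => g (X ω)) =ᵐ[μ] μ[Y | MeasurableSpace.comap X inferInstance])
    {φ ψ : E → ℝ} (hφ : Measurable φ) (hψ : Measurable ψ)
    (hφX : MemLp (fun ω => φ (X ω)) ⊤ μ) (hψX : MemLp (fun ω => ψ (X ω)) ⊤ μ) :
    cov[fun ω => φ (X ω), fun ω => ψ (X ω) * (Y ω - g (X ω)); μ] = 0 := by
  have hgX : MemLp (fun ω => g (X ω)) 2 μ := (hY.condExp one_le_two).ae_eq hcond.symm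
  have hres : MemLp (fun ω => ψ (X ω) * (Y ω - g (X ω))) 2 μ := (hY.sub hgX).mul' hψX
  have hprod : ∫ ω, φ (X ω) * (ψ (X ω) * (Y ω - g (X ω))) ∂μ = 0 := by
    simp_rw [← mul_assoc]
    exact integral_comp_mul_sub_eq_zero hX (hY.integrable one_le_two) hcond (hφ.mul hψ)
      (hψX.mul' hφX)
  have hmean : ∫ ω, ψ (X ω) * (Y ω - g (X ω)) ∂μ = 0 :=
    integral_comp_mul_sub_eq_zero hX (hY.integrable one_le_two) hcond hψ hψX
  rw [covariance_eq_sub (hφX.mono_exponent le_top) hres]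
  simp [Pi.mul_apply, hprod, hmean]

end Regression

lemma ProbabilityTheory.IdentDistrib.covariance_comp_eq {α β γ : Type*} {mα : MeasurableSpace α}
    {mβ : MeasurableSpace β} [MeasurableSpace γ] {μ : Measure α} {ν : Measure β}
    {Z : α → γ} {Z' : β → γ} (h : IdentDistrib Z Z' μ ν) {F G : γ → ℝ}
    (hF : Measurable F) (hG : Measurable G) :
    cov[F ∘ Z, G ∘ Z; μ] = cov[F ∘ Z', G ∘ Z'; ν] := by
  rw [covariance, covariance, (h.comp hF).integral_eq, (h.comp hG).integral_eq]
  exact (h.comp ((hF.sub_const _).mul (hG.sub_const _))).integral_eq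

theorem Gn_Hr_uncorrelated_general
    {Ω : Type*} {E : Type*} [MeasurableSpace Ω] [MeasurableSpace E]
    (μ : Measure Ω) [IsProbabilityMeasure μ]
    (n : ℕ) (hn : 0 < n)
    (X : Fin n → Ω → E) (Y : Fin n → Ω → ℝ)
    (hpairmeas : ∀ i, Measurable (fun ω => (X i ω, Y i ω)))
    (hindep : iIndepFun (fun i ω => (X i ω, Y i ω)) μ)
    (hident : ∀ i, IdentDistrib (fun ω => (X i ω, Y i ω))
        (fun ω => (X ⟨0, hn⟩ ω, Y ⟨0, hn⟩ ω)) μ μ)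
    (hYbin : ∀ i ω, Y i ω = 0 ∨ Y i ω = 1)
    (g w g' : E → ℝ)
    (hg : Measurable g) (hw : Measurable w) (hg' : Measurable g')
    (Cg Cw Cg' : ℝ)
    (hgb : ∀ t, |g t| ≤ Cg) (hwb : ∀ t, |w t| ≤ Cw) (hg'b : ∀ t, |g' t| ≤ Cg')
    (hcond : (fun ω => g (X ⟨0, hn⟩ ω)) =ᵐ[μ]
        μ[Y ⟨0, hn⟩ | MeasurableSpace.comap (X ⟨0, hn⟩) inferInstance])
    (q : ℝ)
    (r : ℕ)
    (G H : Ω → ℝ)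
    (hG : G = fun ω => ∑ i : Fin n, (g (X i ω) - q))
    (hH : H = fun ω => ∑ i ∈ Finset.univ.filter (fun i : Fin n => (i : ℕ) < r),
        w (X i ω) * (Y i ω - g (X i ω)) * g' (X i ω)) :
    ∫ ω, (G ω - ∫ ω', G ω' ∂μ) * (H ω - ∫ ω', H ω' ∂μ) ∂μ = 0 := by
  have hX i : Measurable (X i) := measurable_fst.comp (hpairmeas i)
  have hY i : MemLp (Y i) ⊤ μ :=
    memLp_top_of_bound (measurable_snd.comp (hpairmeas i)).aestronglyMeasurable 1 <|
      ae_of_all _ fun ω => by rcases hYbin i ω with h | h <;> simp [h]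
  have hgX i := memLp_top_comp_of_abs_le (μ := μ) (hX i) hg hgb
  have hwX i := memLp_top_comp_of_abs_le (μ := μ) (hX i) hw hwb
  have hg'X i := memLp_top_comp_of_abs_le (μ := μ) (hX i) hg' hg'b
  set a : Fin n → Ω → ℝ := fun i ω => g (X i ω) - q
  set b : Fin n → Ω → ℝ := fun i ω => w (X i ω) * (Y i ω - g (X i ω)) * g' (X i ω)
  have ha i : MemLp (a i) 2 μ := ((hgX i).sub (memLp_const q)).mono_exponent le_top
  have hb i : MemLp (b i) 2 μ :=
    ((hg'X i).mul' (r := ⊤) (((hY i).sub (hgX i)).mul' (r := ⊤) (hwX i))).mono_exponent le_top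
  have hφ : Measurable fun p : E × ℝ => g p.1 - q := by fun_prop
  have hψ : Measurable fun p : E × ℝ => w p.1 * (p.2 - g p.1) * g' p.1 := by fun_prop
  have hdiag i : cov[a i, b i; μ] = 0 := by
    refine ((hident i).covariance_comp_eq hφ hψ).trans (Eq.trans ?_ <|
      covariance_comp_mul_sub_eq_zero (hX _) ((hY _).mono_exponent le_top) hcond
        (hg.sub_const q) (hw.mul hg') ((hgX _).sub (memLp_const q)) ((hg'X _).mul' (hwX _)))
    congr 1
    ext ω
    exact mul_right_comm _ _ _
  have hcross i j (hij : i ≠ j) : cov[a i, b j; μ] = 0 :=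
    ((hindep.indepFun hij).comp hφ hψ).covariance_eq_zero (ha i) (hb j)
  change cov[G, H; μ] = 0
  subst hG hH
  rw [covariance_fun_sum_fun_sum' (fun i _ => ha i) (fun j _ => hb j)]
  refine Finset.sum_eq_zero fun i _ => Finset.sum_eq_zero fun j _ => ?_
  rcases eq_or_ne i j with rfl | hij
  exacts [hdiag i, hcross i j hij]

/-- The terms `G_n` and `H_r` in the proof of the paper's asymptotic variance
theorem are uncorrelated: for i.i.d. pairs `(X_i, Y_i)` with binary `Y_i`,
`g ∘ X_1` a version of `E[Y_1 | σ(X_1)]`, and `q = E[g(X_1)]`,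
`Cov(Σ_{i≤n} (g(X_i) - q), Σ_{i≤r} w(X_i)(Y_i - g(X_i)) g'(X_i)) = 0`. -/
theorem Gn_Hr_uncorrelated
    {Ω : Type*} {E : Type*} [MeasurableSpace Ω] [MeasurableSpace E]
    (μ : Measure Ω) [IsProbabilityMeasure μ]
    (n : ℕ) (hn : 0 < n)
    (X : Fin n → Ω → E) (Y : Fin n → Ω → ℝ)
    (hpairmeas : ∀ i, Measurable (fun ω => (X i ω, Y i ω)))
    (hindep : iIndepFun (fun i ω => (X i ω, Y i ω)) μ)
    (hident : ∀ i, IdentDistrib (fun ω => (X i ω, Y i ω))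
        (fun ω => (X ⟨0, hn⟩ ω, Y ⟨0, hn⟩ ω)) μ μ)
    (hYbin : ∀ i ω, Y i ω = 0 ∨ Y i ω = 1)
    (g w g' : E → ℝ)
    (hg : Measurable g) (hw : Measurable w) (hg' : Measurable g')
    (Cg Cw Cg' : ℝ)
    (hgb : ∀ t, |g t| ≤ Cg) (hwb : ∀ t, |w t| ≤ Cw) (hg'b : ∀ t, |g' t| ≤ Cg')
    (hcond : (fun ω => g (X ⟨0, hn⟩ ω)) =ᵐ[μ]
        μ[Y ⟨0, hn⟩ | MeasurableSpace.comap (X ⟨0, hn⟩) inferInstance])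
    (q : ℝ) (hq : q = ∫ ω, g (X ⟨0, hn⟩ ω) ∂μ)
    (r : ℕ) (hr : 1 ≤ r) (hrn : r ≤ n)
    (G H : Ω → ℝ)
    (hG : G = fun ω => ∑ i : Fin n, (g (X i ω) - q))
    (hH : H = fun ω => ∑ i ∈ Finset.univ.filter (fun i : Fin n => (i : ℕ) < r),
        w (X i ω) * (Y i ω - g (X i ω)) * g' (X i ω)) :
    ∫ ω, (G ω - ∫ ω', G ω' ∂μ) * (H ω - ∫ ω', H ω' ∂μ) ∂μ = 0 :=
  Gn_Hr_uncorrelated_general μ n hn X Y hpairmeas hindep hident hYbin g w g' hg hw hg' Cg Cw Cg' hgb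
    hwb hg'b hcond q r G H hG hH
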